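/- arXiv:1404.0969 — 3 statements merged into one kernel-verified Lean document; each statement's English description precedes it below -/
import Mathlib

section
/- Suppose p ≡ 1 (mod 4). Then the sum over all (α,β,γ) ∈ F³ of T(α,β,γ)² equals p^{3m}·(2p^m − 1). -/
/-!
Expanding the square and summing over `α, β, γ` first, orthogonality of the primitive
additive character `ψ` leaves `q³` times the number of pairs `(x, y) ∈ F²` with
`x^{p^{2k}+1} + y^{p^{2k}+1} = x^{p^k+1} + y^{p^k+1} = x² + y² = 0`, where `q = p^m`.
Since `p ≡ 1 (mod 4)`, both exponents `p^{2k}+1` and `p^k+1` are twice an odd number, so the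
first two equations follow from `x² + y² = 0`. As `-1 = i²` is a square in `F`, the solutions
of `x² + y² = 0` are the two lines `y = ± i x`, meeting only at the origin: `2q - 1` pairs.
-/

/-- The exponential sum `T(α,β,γ) = ∑_{x ∈ F} ζ_p^{Tr(α x^{p^{2k}+1} + β x^{p^k+1} + γ x²)}`. -/
noncomputable def expSumT (p k : ℕ) (F : Type*) [Field F] [Fintype F] [Algebra (ZMod p) F]
    (α β γ : F) : ℂ :=
  ∑ x : F, Complex.exp (2 * (Real.pi : ℂ) * Complex.I *
    ((Algebra.trace (ZMod p) F
      (α * x ^ (p ^ (2 * k) + 1) + β * x ^ (p ^ k + 1) + γ * x ^ 2)).val : ℂ) / (p : ℂ))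

open Finset

lemma sq_sum_addChar_comp {ι A M : Type*} [Fintype ι] [AddMonoid A] [CommSemiring M]
    (ψ : AddChar A M) (φ : ι → A) :
    (∑ x, ψ (φ x)) ^ 2 = ∑ z : ι × ι, ψ (φ z.1 + φ z.2) := by
  simp_rw [sq, sum_mul_sum, Fintype.sum_prod_type, AddChar.map_add_eq_mul]

theorem sum_sq_sum_addChar {R K : Type*} [CommRing R] [Fintype R] [DecidableEq R]
    [CommRing K] [IsDomain K] {ψ : AddChar R K} (hψ : ψ.IsPrimitive) (f g h : R → R) :
    ∑ α, ∑ β, ∑ γ, (∑ x, ψ (α * f x + β * g x + γ * h x)) ^ 2 =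
      Fintype.card R ^ 3 *
        #{z : R × R | f z.1 + f z.2 = 0 ∧ g z.1 + g z.2 = 0 ∧ h z.1 + h z.2 = 0} := by
  have orth (u : R) : ∑ α, ψ (α * u) = if u = 0 then (Fintype.card R : K) else 0 := by
    rw [AddChar.sum_mulShift u hψ, Nat.cast_ite, Nat.cast_zero]
  calc _ = ∑ α, ∑ β, ∑ γ, ∑ z : R × R, ψ (α * (f z.1 + f z.2)) * ψ (β * (g z.1 + g z.2)) *
          ψ (γ * (h z.1 + h z.2)) := by
        simp_rw [sq_sum_addChar_comp, ← AddChar.map_add_eq_mul]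
        congr! 5 with α β γ z
        ring
    _ = ∑ z : R × R, (∑ α, ψ (α * (f z.1 + f z.2))) * (∑ β, ψ (β * (g z.1 + g z.2))) *
          ∑ γ, ψ (γ * (h z.1 + h z.2)) := by
        simp_rw [sum_comm (t := (univ : Finset (R × R)))]
        refine sum_congr rfl fun z _ ↦ ?_
        rw [sum_mul_sum, sum_mul]
        simp_rw [sum_mul, mul_sum]
    _ = ∑ z : R × R, if f z.1 + f z.2 = 0 ∧ g z.1 + g z.2 = 0 ∧ h z.1 + h z.2 = 0
          then (Fintype.card R : K) ^ 3 else 0 := by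
        simp_rw [orth]
        congr! 1 with z
        split_ifs <;> simp_all [pow_succ]
    _ = _ := by rw [sum_ite, sum_const_zero, add_zero, sum_const, nsmul_eq_mul, mul_comm]

lemma pow_add_pow_eq_zero_of_sq_add_sq_eq_zero {R : Type*} [CommRing R] {x y : R}
    (h : x ^ 2 + y ^ 2 = 0) {n : ℕ} (hn : n % 4 = 2) : x ^ n + y ^ n = 0 := by
  obtain ⟨j, rfl⟩ : ∃ j, n = 2 * j := ⟨n / 2, by omega⟩
  have hj : Odd j := Nat.odd_iff.2 (by omega)
  rw [pow_mul, pow_mul, eq_neg_of_add_eq_zero_right h, hj.neg_pow, add_neg_cancel]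

lemma sq_add_sq_eq_zero_iff {R : Type*} [CommRing R] [NoZeroDivisors R] {i : R}
    (hi : i ^ 2 = -1) {x y : R} : x ^ 2 + y ^ 2 = 0 ↔ y = i * x ∨ y = -(i * x) := by
  have : x ^ 2 + y ^ 2 = (y - i * x) * (y + i * x) := by linear_combination x ^ 2 * hi
  rw [this, mul_eq_zero, sub_eq_zero, add_eq_zero_iff_eq_neg]

lemma card_sq_add_sq_eq_zero_add_one {F : Type*} [Field F] [Fintype F] [DecidableEq F]
    (hF : Fintype.card F % 4 = 1) :
    #{z : F × F | z.1 ^ 2 + z.2 ^ 2 = 0} + 1 = 2 * Fintype.card F := by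
  obtain ⟨i, hi⟩ := FiniteField.isSquare_neg_one_iff.2 (by omega : Fintype.card F % 4 ≠ 3)
  replace hi : i ^ 2 = -1 := by rw [sq, ← hi]
  have h2 : (2 : F) ≠ 0 :=
    Ring.two_ne_zero fun h ↦ by have := FiniteField.even_card_iff_char_two.1 h; omega
  have hi0 : i ≠ 0 := by rintro rfl; norm_num at hi
  set graph : F → Finset (F × F) := fun c ↦ univ.image fun x ↦ (x, c * x)
  have card_graph (c : F) : #(graph c) = Fintype.card F :=
    card_image_of_injective _ fun _ _ h ↦ (Prod.ext_iff.1 h).1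
  have hunion : ({z : F × F | z.1 ^ 2 + z.2 ^ 2 = 0} : Finset _) = graph i ∪ graph (-i) := by
    ext ⟨x, y⟩
    simp [graph, sq_add_sq_eq_zero_iff hi, eq_comm (a := y)]
  have hinter : graph i ∩ graph (-i) = {(0, 0)} := by
    ext ⟨x, y⟩
    simp only [graph, neg_mul, mem_inter, mem_image, mem_univ, Prod.mk.injEq, true_and,
      exists_eq_left, mem_singleton]
    constructor
    · rintro ⟨rfl, h⟩
      have hx : x = 0 :=
        (mul_eq_zero.1 (by linear_combination -h : 2 * i * x = 0)).resolve_left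
          (mul_ne_zero h2 hi0)
      simp [hx]
    · rintro ⟨rfl, rfl⟩
      simp
  have := card_union_add_card_inter (graph i) (graph (-i))
  rw [hinter, card_singleton, card_graph, card_graph, ← hunion] at this
  omega

noncomputable def traceAddChar (p : ℕ) [NeZero p] (F : Type*) [Field F] [Fintype F]
    [Algebra (ZMod p) F] : AddChar F ℂ :=
  ZMod.stdAddChar.compAddMonoidHom (Algebra.trace (ZMod p) F).toAddMonoidHom

lemma isPrimitive_traceAddChar (p : ℕ) [Fact p.Prime] (F : Type*) [Field F] [Fintype F]
    [Algebra (ZMod p) F] : (traceAddChar p F).IsPrimitive := by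
  refine AddChar.IsPrimitive.of_ne_one fun h ↦ ?_
  obtain ⟨a, ha⟩ := Algebra.trace_surjective (ZMod p) F 1
  have : ZMod.stdAddChar (1 : ZMod p) = ZMod.stdAddChar (0 : ZMod p) := by
    simpa [traceAddChar, ha] using DFunLike.congr_fun h a
  exact one_ne_zero (ZMod.injective_stdAddChar this)

lemma expSumT_eq_sum_traceAddChar (p k : ℕ) [NeZero p] (F : Type*) [Field F] [Fintype F]
    [Algebra (ZMod p) F] (α β γ : F) :
    expSumT p k F α β γ =
      ∑ x, traceAddChar p F (α * x ^ (p ^ (2 * k) + 1) + β * x ^ (p ^ k + 1) + γ * x ^ 2) := by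
  simp only [expSumT, traceAddChar, AddChar.compAddMonoidHom_apply, ZMod.stdAddChar_apply,
    ZMod.toCircle_apply]
  rfl

theorem sum_T_sq_of_one_mod_four_general (p m k : ℕ) (hp : p.Prime) (hp4 : p % 4 = 1)
    (F : Type*) [Field F] [Fintype F] [Algebra (ZMod p) F]
    (hF : Fintype.card F = p ^ m) :
    ∑ α : F, ∑ β : F, ∑ γ : F, (expSumT p k F α β γ) ^ 2
      = (p : ℂ) ^ (3 * m) * (2 * (p : ℂ) ^ m - 1) := by
  classical
  have : Fact p.Prime := ⟨hp⟩
  have hexp (t : ℕ) : (p ^ t + 1) % 4 = 2 := by simp [Nat.add_mod, Nat.pow_mod, hp4]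
  have hsolutions : ∀ z : F × F,
      (z.1 ^ (p ^ (2 * k) + 1) + z.2 ^ (p ^ (2 * k) + 1) = 0 ∧
        z.1 ^ (p ^ k + 1) + z.2 ^ (p ^ k + 1) = 0 ∧ z.1 ^ 2 + z.2 ^ 2 = 0) ↔
      z.1 ^ 2 + z.2 ^ 2 = 0 := fun z ↦
    ⟨fun h ↦ h.2.2, fun h ↦ ⟨pow_add_pow_eq_zero_of_sq_add_sq_eq_zero h (hexp _),
      pow_add_pow_eq_zero_of_sq_add_sq_eq_zero h (hexp _), h⟩⟩
  have hcount : (#{z : F × F | z.1 ^ 2 + z.2 ^ 2 = 0} : ℂ) + 1 = 2 * (p : ℂ) ^ m := by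
    exact_mod_cast hF ▸ card_sq_add_sq_eq_zero_add_one (by simp [hF, Nat.pow_mod, hp4])
  simp_rw [expSumT_eq_sum_traceAddChar]
  rw [sum_sq_sum_addChar (isPrimitive_traceAddChar p F), filter_congr fun z _ ↦ hsolutions z, hF]
  push_cast
  linear_combination (p : ℂ) ^ (3 * m) * hcount

theorem sum_T_sq_of_one_mod_four (p m k : ℕ) (hp : p.Prime) (hp4 : p % 4 = 1)
    (hm : Odd m) (hm5 : 5 ≤ m) (hk : 0 < k) (hgcd : Nat.gcd m k = 1)
    (F : Type*) [Field F] [Fintype F] [Algebra (ZMod p) F]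
    (hF : Fintype.card F = p ^ m) :
    ∑ α : F, ∑ β : F, ∑ γ : F, (expSumT p k F α β γ) ^ 2
      = (p : ℂ) ^ (3 * m) * (2 * (p : ℂ) ^ m - 1) :=
  sum_T_sq_of_one_mod_four_general p m k hp hp4 F hF
end

section
/- Suppose p ≡ 3 (mod 4). Then the number N₄ of quadruples (x₁,x₂,x₃,x₄) ∈ F⁴ satisfying x₁² + x₂² + x₃² + x₄² = 0, x₁^{p^k+1} + x₂^{p^k+1} + x₃^{p^k+1} + x₄^{p^k+1} = 0, and x₁^{p^{2k}+1} + x₂^{p^{2k}+1} + x₃^{p^{2k}+1} + x₄^{p^{2k}+1} = 0 equals (p+1)(p^m − 1)(2p^m − p + 1) + 1. -/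
/-!
Pick `a, b ∈ 𝔽_p` with `a² + b² = -1`. The `𝔽_p`-linear substitution `twist a b` turns
`x₁² + x₂² + x₃² + x₄²` into the determinant of a 2 × 2 matrix `Y` and commutes with
`σ : t ↦ t ^ p ^ k`. As `Q (x + σ x) = Q x + 2 B (x, σ x) + σ (Q x)` for the quadratic form `Q`
with bilinear form `B`, the three equations become `det Y = det (Y + σ Y) = det (Y + σ² Y) = 0`.
The first says `Y = c rᵀ`, and then `det (Y + σ Y) = det [c σc] · det [r σr]`, so `c` or `r` is
proportional to a `σ`-fixed vector, i.e. (as `gcd (k, m) = 1`) to a vector over `𝔽_p`; such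
matrices satisfy all three equations. There are `(p + 1)(q² - 1) + 1` matrices `c rᵀ` with
`c ∈ 𝔽_p²`, as many transposes of these, and `(p + 1)² (q - 1) + 1` in both families, where
`q = p ^ m`; inclusion–exclusion gives the count.
-/

namespace N4Count

open Function

section Matrices

variable {α R F : Type*} [CommRing R] [Field F]

/-- Quadruples `(Y₁₁, Y₁₂, Y₂₁, Y₂₂)` stand for 2 × 2 matrices. -/
def det (Y : R × R × R × R) : R := Y.1 * Y.2.2.2 - Y.2.1 * Y.2.2.1

def outer (c r : R × R) : R × R × R × R := (c.1 * r.1, c.1 * r.2, c.2 * r.1, c.2 * r.2)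

def transpose (Y : α × α × α × α) : α × α × α × α := (Y.1, Y.2.2.1, Y.2.1, Y.2.2.2)

def map (σ : α → α) (Y : α × α × α × α) : α × α × α × α := (σ Y.1, σ Y.2.1, σ Y.2.2.1, σ Y.2.2.2)

lemma det_outer (c r : R × R) : det (outer c r) = 0 := by
  simp only [det, outer]; ring

lemma det_outer_add_outer (c r c' r' : R × R) :
    det (outer c r + outer c' r') = (c.1 * c'.2 - c.2 * c'.1) * (r.1 * r'.2 - r.2 * r'.1) := by
  simp only [det, outer, Prod.fst_add, Prod.snd_add]; ring

lemma det_transpose (Y : R × R × R × R) : det (transpose Y) = det Y := by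
  simp only [det, transpose]; ring

lemma transpose_add [Add α] (Y Z : α × α × α × α) :
    transpose (Y + Z) = transpose Y + transpose Z := rfl

lemma transpose_map (σ : α → α) (Y : α × α × α × α) : transpose (map σ Y) = map σ (transpose Y) :=
  rfl

lemma transpose_involutive : Involutive (transpose (α := α)) := fun _ => rfl

lemma transpose_outer (c r : R × R) : transpose (outer c r) = outer r c := by
  simp only [transpose, outer, mul_comm]

lemma outer_smul_left (a : R) (c r : R × R) : outer (a • c) r = outer c (a • r) := by
  simp only [outer, Prod.smul_fst, Prod.smul_snd, smul_eq_mul, Prod.mk.injEq]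
  refine ⟨?_, ?_, ?_, ?_⟩ <;> ring

lemma map_outer (σ : R →+* R) (c r : R × R) :
    map σ (outer c r) = outer (σ c.1, σ c.2) (σ r.1, σ r.2) := by
  simp only [map, outer, map_mul]

lemma exists_outer_of_det_eq_zero {Y : F × F × F × F} (h : det Y = 0) : ∃ c r, Y = outer c r := by
  obtain ⟨y₁, y₂, y₃, y₄⟩ := Y
  simp only [det, sub_eq_zero] at h
  by_cases h₁ : y₁ = 0
  · rw [h₁, zero_mul, eq_comm, mul_eq_zero] at h
    rcases h with rfl | rfl
    · exact ⟨(0, 1), (y₃, y₄), by simp [outer, h₁]⟩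
    · exact ⟨(y₂, y₄), (0, 1), by simp [outer, h₁]⟩
  · refine ⟨(1, y₃ / y₁), (y₁, y₂), ?_⟩
    simp only [outer, Prod.mk.injEq]
    refine ⟨by ring, by ring, by field_simp, by field_simp; linear_combination h⟩

end Matrices

section ProjectiveLine

variable {F : Type*} [Field F] (K : Subfield F)

/-- Representatives of the points of the projective line over `K`. -/
def lineRep : Option K → F × F
  | none => (0, 1)
  | some t => (1, t)

lemma lineRep_ne_zero (s : Option K) : lineRep K s ≠ 0 := by
  cases s <;> simp [lineRep, Prod.ext_iff]

lemma lineRep_mem (s : Option K) : (lineRep K s).1 ∈ K ∧ (lineRep K s).2 ∈ K := by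
  cases s <;> simp [lineRep, K.zero_mem, K.one_mem]

lemma outer_lineRep_eq_zero_iff {s : Option K} {r : F × F} : outer (lineRep K s) r = 0 ↔ r = 0 := by
  cases s <;> simp +contextual [lineRep, outer, Prod.ext_iff]

lemma outer_lineRep_injective {s s' : Option K} {r r' : F × F} (hr : r ≠ 0)
    (h : outer (lineRep K s) r = outer (lineRep K s') r') : s = s' ∧ r = r' := by
  obtain ⟨r₁, r₂⟩ := r
  obtain ⟨r₁', r₂'⟩ := r'
  rw [Ne, Prod.mk_eq_zero, not_and] at hr
  rcases s with _ | ⟨t, ht⟩ <;> rcases s' with _ | ⟨t', ht'⟩ <;>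
    simp only [lineRep, outer, Prod.mk.injEq, zero_mul, one_mul, Option.some.injEq,
      Subtype.mk.injEq, reduceCtorEq, false_and, true_and] at h ⊢
  · exact h
  · grind
  · grind
  · obtain ⟨rfl, rfl, h₁, h₂⟩ := h
    refine ⟨?_, rfl, rfl⟩
    by_cases h₀ : r₁ = 0
    · exact mul_right_cancel₀ (hr h₀) h₂
    · exact mul_right_cancel₀ h₀ h₁

lemma smul_lineRep_injective {a b : F} {s t : Option K} (ha : a ≠ 0)
    (h : a • lineRep K s = b • lineRep K t) : a = b ∧ s = t := by
  rcases s with _ | ⟨s, hs⟩ <;> rcases t with _ | ⟨t, ht⟩ <;>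
    simp only [lineRep, Prod.smul_mk, smul_eq_mul, mul_zero, mul_one, Prod.mk.injEq,
      Option.some.injEq, Subtype.mk.injEq, reduceCtorEq, and_false, and_true, true_and] at h ⊢
  · exact h
  · exact ha (h.2.trans (by rw [← h.1, zero_mul]))
  · exact ha h.1
  · exact ⟨h.1, mul_left_cancel₀ ha (h.1 ▸ h.2)⟩

lemma exists_smul_lineRep {c : F × F} (hc : c.1 ≠ 0 → c.2 / c.1 ∈ K) :
    ∃ (a : F) (s : Option K), c = a • lineRep K s := by
  by_cases h₁ : c.1 = 0
  · exact ⟨c.2, none, by simp [lineRep, Prod.ext_iff, h₁]⟩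
  · exact ⟨c.1, some ⟨_, hc h₁⟩, by simp [lineRep, mul_div_cancel₀ _ h₁]⟩

lemma exists_eq_smul_of_outer_lineRep_eq {s : Option K} {r c v : F × F}
    (h : outer (lineRep K s) r = outer c v) : ∃ a : F, r = a • v := by
  rcases s with _ | t <;> simp only [outer, lineRep, zero_mul, one_mul, Prod.ext_iff] at h
  · exact ⟨c.2, by simp [Prod.ext_iff, h]⟩
  · exact ⟨c.1, by simp [Prod.ext_iff, h]⟩

end ProjectiveLine

section RationalRankOne

variable {F : Type*} [Field F] (K : Subfield F)

/-- The matrices `c rᵀ` with `c ∈ K²`. -/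
def colSet : Set (F × F × F × F) := {Y | ∃ s r, outer (lineRep K s) r = Y}

def rowSet : Set (F × F × F × F) := transpose ⁻¹' colSet K

lemma outer_mem_colSet {c : F × F} (hc : c.1 ≠ 0 → c.2 / c.1 ∈ K) (r : F × F) :
    outer c r ∈ colSet K := by
  obtain ⟨a, s, rfl⟩ := exists_smul_lineRep K hc
  exact ⟨s, a • r, (outer_smul_left a _ r).symm⟩

lemma div_mem_of_mul_map_sub_eq_zero (σ : F →+* F) (hσ : ∀ e, σ e = e → e ∈ K) {c : F × F}
    (h : c.1 * σ c.2 - c.2 * σ c.1 = 0) (hc : c.1 ≠ 0) : c.2 / c.1 ∈ K := by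
  refine hσ _ ?_
  rw [map_div₀, div_eq_div_iff ((map_ne_zero σ).2 hc) hc]
  linear_combination h

lemma mem_colSet_union_rowSet (σ : F →+* F) (hσ : ∀ e, σ e = e → e ∈ K) {Y : F × F × F × F}
    (h₁ : det Y = 0) (h₂ : det (Y + map σ Y) = 0) : Y ∈ colSet K ∪ rowSet K := by
  obtain ⟨c, r, rfl⟩ := exists_outer_of_det_eq_zero h₁
  rw [map_outer, det_outer_add_outer, mul_eq_zero] at h₂
  rcases h₂ with hc | hr
  · exact Or.inl (outer_mem_colSet K (div_mem_of_mul_map_sub_eq_zero K σ hσ hc) r)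
  · refine Or.inr ?_
    rw [rowSet, Set.mem_preimage, transpose_outer]
    exact outer_mem_colSet K (div_mem_of_mul_map_sub_eq_zero K σ hσ hr) c

lemma det_eq_zero_of_mem {Y : F × F × F × F} (hY : Y ∈ colSet K ∪ rowSet K) : det Y = 0 := by
  rcases hY with ⟨s, r, rfl⟩ | ⟨s, r, hY⟩
  · exact det_outer _ _
  · rw [← det_transpose, ← hY, det_outer]

lemma det_add_map_eq_zero_of_mem_colSet (τ : F →+* F) (hτ : ∀ e ∈ K, τ e = e)
    {Y : F × F × F × F} (hY : Y ∈ colSet K) : det (Y + map τ Y) = 0 := by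
  obtain ⟨s, r, rfl⟩ := hY
  obtain ⟨h₁, h₂⟩ := lineRep_mem K s
  rw [map_outer, hτ _ h₁, hτ _ h₂, det_outer_add_outer]
  ring

lemma det_add_map_eq_zero_of_mem (τ : F →+* F) (hτ : ∀ e ∈ K, τ e = e) {Y : F × F × F × F}
    (hY : Y ∈ colSet K ∪ rowSet K) : det (Y + map τ Y) = 0 := by
  rcases hY with hY | hY
  · exact det_add_map_eq_zero_of_mem_colSet K τ hτ hY
  · rw [← det_transpose, transpose_add, transpose_map]
    exact det_add_map_eq_zero_of_mem_colSet K τ hτ hY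

end RationalRankOne

section Counting

lemma ncard_insert_range {α β : Type*} [Finite β] {f : β → α} (hf : Injective f) {a : α}
    (ha : ∀ b, f b ≠ a) : (insert a (Set.range f)).ncard = Nat.card β + 1 := by
  rw [Set.ncard_insert_of_notMem (by rintro ⟨b, hb⟩; exact ha b hb),
    Set.ncard_range_of_injective hf]

lemma card_subtype_ne_add_one {α : Type*} [Finite α] (a : α) :
    Nat.card {x // x ≠ a} + 1 = Nat.card α := by
  rw [← Set.ncard_add_ncard_compl {a}, Set.ncard_singleton, add_comm]
  rfl

variable {F : Type*} [Field F] (K : Subfield F)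

lemma colSet_eq : colSet K = insert 0
    (Set.range fun z : Option K × {r : F × F // r ≠ 0} => outer (lineRep K z.1) z.2) := by
  ext Y
  constructor
  · rintro ⟨s, r, rfl⟩
    by_cases hr : r = 0
    · exact Or.inl ((outer_lineRep_eq_zero_iff K).2 hr)
    · exact Or.inr ⟨(s, ⟨r, hr⟩), rfl⟩
  · rintro (rfl | ⟨z, rfl⟩)
    · exact ⟨none, 0, (outer_lineRep_eq_zero_iff K).2 rfl⟩
    · exact ⟨z.1, z.2, rfl⟩

lemma colSet_inter_rowSet_eq : colSet K ∩ rowSet K = insert 0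
    (Set.range fun z : Option K × Option K × {a : F // a ≠ 0} =>
      outer (lineRep K z.1) (z.2.2.1 • lineRep K z.2.1)) := by
  ext Y
  constructor
  · rintro ⟨⟨s, r, rfl⟩, ⟨s', r', hY⟩⟩
    rw [← transpose_involutive.eq_iff, transpose_outer, eq_comm] at hY
    obtain ⟨a, rfl⟩ := exists_eq_smul_of_outer_lineRep_eq K hY
    by_cases ha : a = 0
    · exact Or.inl ((outer_lineRep_eq_zero_iff K).2 (by rw [ha, zero_smul]))
    · exact Or.inr ⟨(s, s', ⟨a, ha⟩), rfl⟩
  · rintro (rfl | ⟨⟨s, s', a, -⟩, rfl⟩)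
    · have h₀ : (0 : F × F × F × F) ∈ colSet K := ⟨none, 0, (outer_lineRep_eq_zero_iff K).2 rfl⟩
      exact ⟨h₀, h₀⟩
    · refine ⟨⟨s, _, rfl⟩, s', a • lineRep K s, ?_⟩
      rw [transpose_outer, outer_smul_left]

lemma ncard_rowSet : (rowSet K).ncard = (colSet K).ncard :=
  Set.ncard_preimage_of_injective_subset_range transpose_involutive.injective
    (by rw [transpose_involutive.surjective.range_eq]; exact Set.subset_univ _)

variable [Finite F]

lemma ncard_colSet : ((colSet K).ncard : ℤ) = (Nat.card K + 1) * (Nat.card F ^ 2 - 1) + 1 := by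
  have hinj : Injective fun z : Option K × {r : F × F // r ≠ 0} => outer (lineRep K z.1) z.2 :=
    fun z z' h => Prod.ext (outer_lineRep_injective K z.2.2 h).1
      (Subtype.ext (outer_lineRep_injective K z.2.2 h).2)
  have hne : ∀ z : Option K × {r : F × F // r ≠ 0}, outer (lineRep K z.1) z.2 ≠ 0 :=
    fun z => (outer_lineRep_eq_zero_iff K).not.2 z.2.2
  have hcard : (Nat.card {r : F × F // r ≠ 0} : ℤ) + 1 = Nat.card F ^ 2 := by
    rw [sq, ← Nat.cast_mul, ← Nat.card_prod]
    exact_mod_cast card_subtype_ne_add_one (0 : F × F)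
  rw [colSet_eq, ncard_insert_range hinj hne, Nat.card_prod, Finite.card_option]
  push_cast
  linear_combination (Nat.card K + 1 : ℤ) * hcard

lemma ncard_colSet_inter_rowSet :
    ((colSet K ∩ rowSet K).ncard : ℤ) = (Nat.card K + 1) ^ 2 * (Nat.card F - 1) + 1 := by
  have hinj : Injective fun z : Option K × Option K × {a : F // a ≠ 0} =>
      outer (lineRep K z.1) (z.2.2.1 • lineRep K z.2.1) := by
    rintro ⟨s, t, a, ha⟩ ⟨s', t', a', ha'⟩ h
    have hr : a • lineRep K t ≠ 0 := smul_ne_zero ha (lineRep_ne_zero K t)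
    obtain ⟨rfl, h'⟩ := outer_lineRep_injective K hr h
    obtain ⟨rfl, rfl⟩ := smul_lineRep_injective K ha h'
    rfl
  have hne : ∀ z : Option K × Option K × {a : F // a ≠ 0},
      outer (lineRep K z.1) (z.2.2.1 • lineRep K z.2.1) ≠ 0 :=
    fun z => (outer_lineRep_eq_zero_iff K).not.2 (smul_ne_zero z.2.2.2 (lineRep_ne_zero K _))
  have hcard : (Nat.card {a : F // a ≠ 0} : ℤ) + 1 = Nat.card F := by
    exact_mod_cast card_subtype_ne_add_one (0 : F)
  rw [colSet_inter_rowSet_eq, ncard_insert_range hinj hne, Nat.card_prod, Nat.card_prod,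
    Finite.card_option]
  push_cast
  linear_combination (Nat.card K + 1 : ℤ) ^ 2 * hcard

theorem ncard_colSet_union_rowSet : ((colSet K ∪ rowSet K).ncard : ℤ) =
    (Nat.card K + 1) * (Nat.card F - 1) * (2 * Nat.card F - Nat.card K + 1) + 1 := by
  have h := Set.ncard_union_add_ncard_inter (colSet K) (rowSet K)
  rw [ncard_rowSet] at h
  have hZ : ((colSet K ∪ rowSet K).ncard : ℤ) + (colSet K ∩ rowSet K).ncard =
      2 * (colSet K).ncard := by
    rw [two_mul]; exact_mod_cast h
  rw [ncard_colSet, ncard_colSet_inter_rowSet] at hZ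
  linear_combination hZ

end Counting

section Twist

variable {R F : Type*} [CommRing R] [Field F]

def sumSq (x : R × R × R × R) : R := x.1 ^ 2 + x.2.1 ^ 2 + x.2.2.1 ^ 2 + x.2.2.2 ^ 2

def dot (x y : R × R × R × R) : R :=
  x.1 * y.1 + x.2.1 * y.2.1 + x.2.2.1 * y.2.2.1 + x.2.2.2 * y.2.2.2

/-- With `u = a x₃ + b x₄` and `v = a x₄ - b x₃`, the determinant of `twist a b x` is
`x₁² + x₂² - (u² + v²) = x₁² + x₂² - (a² + b²)(x₃² + x₄²)`, which is `sumSq x` when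
`a² + b² = -1`. -/
def twist (a b : R) (x : R × R × R × R) : R × R × R × R :=
  (x.1 + (a * x.2.2.1 + b * x.2.2.2), x.2.1 + (a * x.2.2.2 - b * x.2.2.1),
    -x.2.1 + (a * x.2.2.2 - b * x.2.2.1), x.1 - (a * x.2.2.1 + b * x.2.2.2))

lemma det_twist {a b : R} (hab : a ^ 2 + b ^ 2 = -1) (x : R × R × R × R) :
    det (twist a b x) = sumSq x := by
  simp only [det, twist, sumSq]
  linear_combination (-x.2.2.1 ^ 2 - x.2.2.2 ^ 2) * hab

lemma twist_add (a b : R) (x y : R × R × R × R) :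
    twist a b (x + y) = twist a b x + twist a b y := by
  simp only [twist, Prod.fst_add, Prod.snd_add, Prod.mk_add_mk, Prod.mk.injEq]
  refine ⟨?_, ?_, ?_, ?_⟩ <;> ring

lemma map_twist (σ : R →+* R) {a b : R} (ha : σ a = a) (hb : σ b = b) (x : R × R × R × R) :
    map σ (twist a b x) = twist a b (map σ x) := by
  simp only [map, twist, map_add, map_sub, map_neg, map_mul, ha, hb]

lemma sumSq_add (x y : R × R × R × R) : sumSq (x + y) = sumSq x + 2 * dot x y + sumSq y := by
  simp only [sumSq, dot, Prod.fst_add, Prod.snd_add]; ring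

lemma sumSq_map (σ : R →+* R) (x : R × R × R × R) : sumSq (map σ x) = σ (sumSq x) := by
  simp only [sumSq, map, map_add, map_pow]

lemma det_twist_add_map (σ : R →+* R) {a b : R} (ha : σ a = a) (hb : σ b = b)
    (hab : a ^ 2 + b ^ 2 = -1) (x : R × R × R × R) :
    det (twist a b x + map σ (twist a b x)) = sumSq x + 2 * dot x (map σ x) + σ (sumSq x) := by
  rw [map_twist σ ha hb, ← twist_add, det_twist hab, sumSq_add, sumSq_map]

lemma twist_injective (h2 : (2 : F) ≠ 0) {a b : F} (hab : a ^ 2 + b ^ 2 = -1) :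
    Injective (twist a b) := by
  rintro ⟨x₁, x₂, x₃, x₄⟩ ⟨y₁, y₂, y₃, y₄⟩ h
  simp only [twist, Prod.mk.injEq] at h
  obtain ⟨e₁, e₂, e₃, e₄⟩ := h
  simp only [Prod.mk.injEq]
  refine ⟨mul_left_cancel₀ h2 ?_, mul_left_cancel₀ h2 ?_, mul_left_cancel₀ h2 ?_,
    mul_left_cancel₀ h2 ?_⟩
  · linear_combination e₁ + e₄
  · linear_combination e₂ - e₃
  · linear_combination -a * e₁ + b * e₂ + b * e₃ + a * e₄ + 2 * (x₃ - y₃) * hab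
  · linear_combination -b * e₁ - a * e₂ - a * e₃ + b * e₄ + 2 * (x₄ - y₄) * hab

theorem twist_mem_colSet_union_rowSet_iff (K : Subfield F) (σ τ : F →+* F)
    (hσ : ∀ e, σ e = e ↔ e ∈ K) (hτ : ∀ e ∈ K, τ e = e) (h2 : (2 : F) ≠ 0) {a b : F}
    (ha : a ∈ K) (hb : b ∈ K) (hab : a ^ 2 + b ^ 2 = -1) (x : F × F × F × F) :
    sumSq x = 0 ∧ dot x (map σ x) = 0 ∧ dot x (map τ x) = 0 ↔
      twist a b x ∈ colSet K ∪ rowSet K := by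
  have hσK : ∀ e ∈ K, σ e = e := fun e he => (hσ e).2 he
  have key (ρ : F →+* F) (hρ : ∀ e ∈ K, ρ e = e) := det_twist_add_map ρ (hρ a ha) (hρ b hb) hab x
  constructor
  · rintro ⟨h₁, h₂, -⟩
    refine mem_colSet_union_rowSet K σ (fun e => (hσ e).1) (by rw [det_twist hab, h₁]) ?_
    rw [key σ hσK, h₁, h₂, map_zero]
    ring
  · intro hY
    have h₁ : sumSq x = 0 := by rw [← det_twist hab]; exact det_eq_zero_of_mem K hY
    have hdot (ρ : F →+* F) (hρ : ∀ e ∈ K, ρ e = e) : dot x (map ρ x) = 0 := by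
      have h := det_add_map_eq_zero_of_mem K ρ hρ hY
      rw [key ρ hρ, h₁, map_zero, add_zero, zero_add] at h
      exact (mul_eq_zero.1 h).resolve_left h2
    exact ⟨h₁, hdot σ hσK, hdot τ hτ⟩

end Twist

section Frobenius

lemma map_eq_self_of_mem_bot {F : Type*} [Field F] (σ : F →+* F) {x : F}
    (hx : x ∈ (⊥ : Subfield F)) : σ x = x :=
  (bot_le : ⊥ ≤ σ.eqLocusField (RingHom.id F)) hx

variable {F : Type*} [Field F] (p : ℕ) [Fact p.Prime] [CharP F p]

lemma dot_map_iterateFrobenius (n : ℕ) (x : F × F × F × F) :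
    dot x (map (iterateFrobenius F p n) x) = x.1 ^ (p ^ n + 1) + x.2.1 ^ (p ^ n + 1) +
      x.2.2.1 ^ (p ^ n + 1) + x.2.2.2 ^ (p ^ n + 1) := by
  simp only [dot, map, iterateFrobenius_def, pow_succ']

lemma mem_bot_of_iterateFrobenius_eq_self [Fintype F] {m n : ℕ} (hF : Fintype.card F = p ^ m)
    (hnm : n.Coprime m) {x : F} (hx : iterateFrobenius F p n x = x) :
    x ∈ (⊥ : Subfield F) := by
  have hn : IsPeriodicPt (frobenius F p) n x := by
    rwa [IsPeriodicPt, IsFixedPt, iterate_frobenius, ← iterateFrobenius_def]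
  have hm : IsPeriodicPt (frobenius F p) m x := by
    rw [IsPeriodicPt, IsFixedPt, iterate_frobenius, ← hF, FiniteField.pow_card]
  have h1 := hn.gcd hm
  rw [hnm] at h1
  rw [Subfield.mem_bot_iff_pow_eq_self F p]
  exact h1

end Frobenius

end N4Count

open N4Count

theorem N4_count_general (p m k : ℕ) (hp : p.Prime) (hp4 : p % 4 = 3)
    (hgcd : Nat.gcd m k = 1)
    (F : Type*) [Field F] [Fintype F] (hF : Fintype.card F = p ^ m) :
    (Nat.card {x : F × F × F × F //
        x.1 ^ 2 + x.2.1 ^ 2 + x.2.2.1 ^ 2 + x.2.2.2 ^ 2 = 0 ∧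
        x.1 ^ (p ^ k + 1) + x.2.1 ^ (p ^ k + 1) + x.2.2.1 ^ (p ^ k + 1)
          + x.2.2.2 ^ (p ^ k + 1) = 0 ∧
        x.1 ^ (p ^ (2 * k) + 1) + x.2.1 ^ (p ^ (2 * k) + 1) + x.2.2.1 ^ (p ^ (2 * k) + 1)
          + x.2.2.2 ^ (p ^ (2 * k) + 1) = 0} : ℤ)
      = ((p : ℤ) + 1) * ((p : ℤ) ^ m - 1) * (2 * (p : ℤ) ^ m - (p : ℤ) + 1) + 1 := by
  have := Fact.mk hp
  have : CharP F p := charP_of_card_eq_prime_pow hF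
  have h2 : (2 : F) ≠ 0 := Ring.two_ne_zero (by rw [ringChar.eq F p]; omega)
  obtain ⟨a, b, hab⟩ := ZMod.sq_add_sq p (-1)
  let φ := ZMod.castHom (dvd_refl p) F
  have hφ (z : ZMod p) : φ z ∈ (⊥ : Subfield F) := by
    rw [← ZMod.fieldRange_castHom_eq_bot p]
    exact ⟨z, rfl⟩
  have hφab : φ a ^ 2 + φ b ^ 2 = -1 := by
    rw [← map_pow, ← map_pow, ← map_add, hab, map_neg, map_one]
  have hfix (e : F) : iterateFrobenius F p k e = e ↔ e ∈ (⊥ : Subfield F) :=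
    ⟨mem_bot_of_iterateFrobenius_eq_self p hF (Nat.coprime_comm.1 hgcd),
      map_eq_self_of_mem_bot _⟩
  have hsys (x : F × F × F × F) :=
    twist_mem_colSet_union_rowSet_iff ⊥ _ (iterateFrobenius F p (2 * k)) hfix
      (fun _ => map_eq_self_of_mem_bot _) h2 (hφ a) (hφ b) hφab x
  simp only [sumSq, dot_map_iterateFrobenius] at hsys
  rw [Nat.card_congr ((Equiv.ofBijective _ (Finite.injective_iff_bijective.1
      (twist_injective h2 hφab))).subtypeEquiv hsys), Nat.card_coe_set_eq,
    ncard_colSet_union_rowSet, Subfield.card_bot, Nat.card_eq_fintype_card, hF]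
  push_cast
  ring

theorem N4_count (p m k : ℕ) (hp : p.Prime) (hp4 : p % 4 = 3)
    (hm : Odd m) (hm5 : 5 ≤ m) (hk : 0 < k) (hgcd : Nat.gcd m k = 1)
    (F : Type*) [Field F] [Fintype F] (hF : Fintype.card F = p ^ m) :
    (Nat.card {x : F × F × F × F //
        x.1 ^ 2 + x.2.1 ^ 2 + x.2.2.1 ^ 2 + x.2.2.2 ^ 2 = 0 ∧
        x.1 ^ (p ^ k + 1) + x.2.1 ^ (p ^ k + 1) + x.2.2.1 ^ (p ^ k + 1)
          + x.2.2.2 ^ (p ^ k + 1) = 0 ∧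
        x.1 ^ (p ^ (2 * k) + 1) + x.2.1 ^ (p ^ (2 * k) + 1) + x.2.2.1 ^ (p ^ (2 * k) + 1)
          + x.2.2.2 ^ (p ^ (2 * k) + 1) = 0} : ℤ)
      = ((p : ℤ) + 1) * ((p : ℤ) ^ m - 1) * (2 * (p : ℤ) ^ m - (p : ℤ) + 1) + 1 :=
  N4_count_general p m k hp hp4 hgcd F hF
end

section
/- Suppose p ≡ 3 (mod 4). Then the number of pairs (x₁,x₂) ∈ F² satisfying x₁² + x₂² = 1, x₁^{p^k+1} + x₂^{p^k+1} = 1, and x₁^{p^{2k}+1} + x₂^{p^{2k}+1} = 1 equals p + 1. -/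
/-!
Since `p ^ m ≡ 3 (mod 4)`, `-1` is not a square in `F`, so `a² + b² = 0` forces `a = b = 0`.
For `q = p ^ n` the Frobenius turns `x² + y² = 1` into `(x^q)² + (y^q)² = 1`, whence on the circle
`(x^q - x)² + (y^q - y)² = 2 (1 - (x^(q+1) + y^(q+1)))`. Hence the last two equations say that `x`
and `y` are fixed by `t ↦ t ^ p ^ k` and `t ↦ t ^ p ^ (2k)`; as they are also fixed by
`t ↦ t ^ p ^ m` and `gcd(m, k) = 1`, this means `x, y ∈ 𝔽_p`. What is left is the circle over
`𝔽_p`, which stereographic projection identifies with `𝔽_p ∪ {∞}`.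
-/

open Function

theorem two_ne_zero_of_not_isSquare_neg_one {R : Type*} [CommRing R] (h : ¬IsSquare (-1 : R)) :
    (2 : R) ≠ 0 := by
  intro h2
  exact h ⟨1, by linear_combination -h2⟩

theorem sq_add_sq_eq_zero_iff_of_not_isSquare_neg_one {K : Type*} [Field K]
    (h : ¬IsSquare (-1 : K)) {a b : K} : a ^ 2 + b ^ 2 = 0 ↔ a = 0 ∧ b = 0 := by
  refine ⟨fun hab => ?_, fun ⟨ha, hb⟩ => by simp [ha, hb]⟩
  have hb : b = 0 := by
    by_contra hb
    exact h ⟨a / b, by field_simp; linear_combination -hab⟩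
  exact ⟨by simpa [hb] using hab, hb⟩

theorem one_add_sq_ne_zero_of_not_isSquare_neg_one {K : Type*} [CommRing K]
    (h : ¬IsSquare (-1 : K)) (t : K) : 1 + t ^ 2 ≠ 0 := by
  intro ht
  exact h ⟨t, by linear_combination -ht⟩

theorem pow_add_one_add_pow_add_one_eq_one_iff {K : Type*} [Field K] {p : ℕ} [ExpChar K p]
    (h : ¬IsSquare (-1 : K)) {x y : K} (hxy : x ^ 2 + y ^ 2 = 1) (n : ℕ) :
    x ^ (p ^ n + 1) + y ^ (p ^ n + 1) = 1 ↔ x ^ p ^ n = x ∧ y ^ p ^ n = y := by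
  have hfrob : (x ^ p ^ n) ^ 2 + (y ^ p ^ n) ^ 2 = 1 := by
    simp_rw [← pow_mul, mul_comm _ 2, pow_mul]
    rw [← add_pow_expChar_pow, hxy, one_pow]
  have hid : (x ^ p ^ n - x) ^ 2 + (y ^ p ^ n - y) ^ 2 =
      2 * (1 - (x ^ (p ^ n + 1) + y ^ (p ^ n + 1))) := by
    linear_combination hfrob + hxy
  rw [← sub_eq_zero (a := x ^ p ^ n), ← sub_eq_zero (a := y ^ p ^ n),
    ← sq_add_sq_eq_zero_iff_of_not_isSquare_neg_one h, hid,
    mul_eq_zero_iff_left (two_ne_zero_of_not_isSquare_neg_one h), sub_eq_zero, eq_comm]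

theorem isPeriodicPt_pow_iff {M : Type*} [Monoid M] (p n : ℕ) (x : M) :
    IsPeriodicPt (· ^ p) n x ↔ x ^ p ^ n = x := by
  rw [IsPeriodicPt, IsFixedPt, pow_iterate]

theorem pow_pow_eq_self_iff_of_coprime {M : Type*} [Monoid M] {p m k : ℕ} {x : M}
    (hx : x ^ p ^ m = x) (hmk : Nat.gcd m k = 1) : x ^ p ^ k = x ↔ x ^ p = x := by
  have hp : x ^ p = x ↔ IsPeriodicPt (· ^ p) 1 x := by rw [isPeriodicPt_pow_iff, pow_one]
  rw [← isPeriodicPt_pow_iff] at hx ⊢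
  rw [hp]
  exact ⟨fun hk => hmk ▸ hx.gcd hk, fun h1 => by simpa using h1.mul_const k⟩

/-- Stereographic projection from `(-1, 0)`: the line through `(-1, 0)` of slope `t` meets the
circle again at `((1 - t²) / (1 + t²), 2t / (1 + t²))`; `none` stands for `(-1, 0)` itself. -/
def circleEquivOption {K : Type*} [Field K] [DecidableEq K] (h : ¬IsSquare (-1 : K)) :
    Option K ≃ {x : K × K // x.1 ^ 2 + x.2 ^ 2 = 1} where
  toFun
    | none => ⟨(-1, 0), by norm_num⟩
    | some t => ⟨((1 - t ^ 2) / (1 + t ^ 2), 2 * t / (1 + t ^ 2)), by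
        have := one_add_sq_ne_zero_of_not_isSquare_neg_one h t
        field_simp; ring⟩
  invFun x := if x.1.1 = -1 then none else some (x.1.2 / (1 + x.1.1))
  left_inv := by
    rintro (_ | t)
    · simp
    · have ht := one_add_sq_ne_zero_of_not_isSquare_neg_one h t
      have h2 := two_ne_zero_of_not_isSquare_neg_one h
      have hx : (1 - t ^ 2) / (1 + t ^ 2) ≠ -1 := by
        rw [Ne, div_eq_iff ht]
        intro h'
        exact h2 (by linear_combination h')
      simp only [hx, if_false, Option.some.injEq]
      field_simp
      rw [show (1 : K) + t ^ 2 + (1 - t ^ 2) = 2 by ring, mul_div_cancel_left₀ t h2]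
  right_inv := by
    rintro ⟨⟨x, y⟩, hxy⟩
    by_cases hx : x = -1
    · subst hx
      have hy : y = 0 := by simpa using hxy
      simp [hy]
    · have hx1 : 1 + x ≠ 0 := fun h' => hx (by linear_combination h')
      have h2 := two_ne_zero_of_not_isSquare_neg_one h
      simp only [hx, if_false, Subtype.mk.injEq, Prod.mk.injEq]
      have hden : 1 + (y / (1 + x)) ^ 2 = 2 / (1 + x) := by
        field_simp
        linear_combination hxy
      simp only [hden]
      exact ⟨by field_simp; linear_combination -hxy, by field_simp⟩

theorem Nat.card_circle_of_not_isSquare_neg_one {K : Type*} [Field K] [Finite K]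
    (h : ¬IsSquare (-1 : K)) : Nat.card {x : K × K // x.1 ^ 2 + x.2 ^ 2 = 1} = Nat.card K + 1 := by
  classical
  rw [← Nat.card_congr (circleEquivOption h), Finite.card_option]

theorem Nat.card_circle_subfield {K : Type*} [Field K] (S : Subfield K) :
    Nat.card {x : S × S // x.1 ^ 2 + x.2 ^ 2 = 1} =
      Nat.card {x : K × K // x.1 ∈ S ∧ x.2 ∈ S ∧ x.1 ^ 2 + x.2 ^ 2 = 1} :=
  Nat.card_congr
    { toFun x := ⟨(x.1.1, x.1.2), x.1.1.2, x.1.2.2, by simpa using congrArg Subtype.val x.2⟩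
      invFun x := ⟨(⟨x.1.1, x.2.1⟩, ⟨x.1.2, x.2.2.1⟩), Subtype.ext x.2.2.2⟩
      left_inv _ := rfl
      right_inv _ := rfl }

theorem not_isSquare_neg_one_subfield {K : Type*} [Field K] (h : ¬IsSquare (-1 : K))
    (S : Subfield K) : ¬IsSquare (-1 : S) :=
  fun ⟨r, hr⟩ => h ⟨r, by simpa using congrArg Subtype.val hr⟩

theorem N1_one_one_general (p m k : ℕ) (hp : p.Prime) (hp4 : p % 4 = 3)
    (hm : Odd m) (hgcd : Nat.gcd m k = 1)
    (F : Type*) [Field F] [Fintype F] (hF : Fintype.card F = p ^ m) :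
    Nat.card {x : F × F //
        x.1 ^ 2 + x.2 ^ 2 = 1 ∧
        x.1 ^ (p ^ k + 1) + x.2 ^ (p ^ k + 1) = 1 ∧
        x.1 ^ (p ^ (2 * k) + 1) + x.2 ^ (p ^ (2 * k) + 1) = 1} = p + 1 := by
  have := Fact.mk hp
  have : CharP F p := charP_of_card_eq_prime_pow hF
  have hneg : ¬IsSquare (-1 : F) := by
    obtain ⟨j, rfl⟩ := hm
    rw [FiniteField.isSquare_neg_one_iff, hF, not_not, Nat.pow_mod, hp4, pow_succ, pow_mul]
    norm_num [Nat.mul_mod, Nat.pow_mod]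
  have hfix (x : F) (n : ℕ) (hn : Nat.gcd m n = 1) : x ^ p ^ n = x ↔ x ∈ (⊥ : Subfield F) :=
    (pow_pow_eq_self_iff_of_coprime (hF ▸ FiniteField.pow_card x) hn).trans
      (Subfield.mem_bot_iff_pow_eq_self F p).symm
  have hgcd2 : Nat.gcd m (2 * k) = 1 := Nat.Coprime.mul_right hm.coprime_two_right hgcd
  have hcond (x : F × F) :
      (x.1 ^ 2 + x.2 ^ 2 = 1 ∧
        x.1 ^ (p ^ k + 1) + x.2 ^ (p ^ k + 1) = 1 ∧
        x.1 ^ (p ^ (2 * k) + 1) + x.2 ^ (p ^ (2 * k) + 1) = 1) ↔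
      x.1 ∈ (⊥ : Subfield F) ∧ x.2 ∈ (⊥ : Subfield F) ∧ x.1 ^ 2 + x.2 ^ 2 = 1 := by
    refine ⟨fun ⟨h1, hpk, _⟩ => ?_, fun ⟨hx, hy, h1⟩ => ?_⟩
    · rw [pow_add_one_add_pow_add_one_eq_one_iff hneg h1, hfix _ _ hgcd, hfix _ _ hgcd] at hpk
      exact ⟨hpk.1, hpk.2, h1⟩
    · simp only [pow_add_one_add_pow_add_one_eq_one_iff hneg h1, hfix _ _ hgcd, hfix _ _ hgcd2]
      exact ⟨h1, ⟨hx, hy⟩, hx, hy⟩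
  rw [Nat.card_congr (Equiv.subtypeEquivRight hcond), ← Nat.card_circle_subfield,
    Nat.card_circle_of_not_isSquare_neg_one (not_isSquare_neg_one_subfield hneg ⊥),
    Subfield.card_bot F p]

theorem N1_one_one (p m k : ℕ) (hp : p.Prime) (hp4 : p % 4 = 3)
    (hm : Odd m) (hm5 : 5 ≤ m) (hk : 0 < k) (hgcd : Nat.gcd m k = 1)
    (F : Type*) [Field F] [Fintype F] (hF : Fintype.card F = p ^ m) :
    Nat.card {x : F × F //
        x.1 ^ 2 + x.2 ^ 2 = 1 ∧
        x.1 ^ (p ^ k + 1) + x.2 ^ (p ^ k + 1) = 1 ∧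
        x.1 ^ (p ^ (2 * k) + 1) + x.2 ^ (p ^ (2 * k) + 1) = 1} = p + 1 :=
  N1_one_one_general p m k hp hp4 hm hgcd F hF
end
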